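/- arXiv:1807.00744 — 3 statements merged into one kernel-verified Lean document; each statement's English description precedes it below -/
import Mathlib

section
/- If a junction tree J satisfies the running intersection property, and a new node n labeled with cluster C(n) is attached by an edge to an existing node m, where every variable in C(n) is either contained in C(m) or does not occur in any existing node of J, then the resulting tree still satisfies the running intersection property. -/
/-!
The new node is a leaf, so a path can pass through it only at an end. A path between old nodes
is therefore a path of `J`, and a path leaving the new node `n` continues from `m` along a
path of `J`. A variable of `C(n) ∩ C(j)` occurs in the old node `j`, so by
hypothesis it lies in `C(m)`, and the old running intersection property between `m` and `j`
applies.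
-/

open Sum

namespace SimpleGraph

variable {α β V : Type*}

def attachLeaf (G : SimpleGraph V) (m : V) : SimpleGraph (V ⊕ Unit) where
  Adj
    | inl a, inl b => G.Adj a b
    | inl a, inr _ => a = m
    | inr _, inl b => b = m
    | inr _, inr _ => False
  symm.symm := by
    rintro (a | a) (b | b) h
    exacts [h.symm, h, h, h]
  loopless.irrefl := by
    rintro (a | a) h
    exacts [G.loopless.irrefl a h, h]

variable {G : SimpleGraph V} {m : V}

@[simp]
lemma attachLeaf_adj_inr_left {x : V ⊕ Unit} : (G.attachLeaf m).Adj (inr ()) x ↔ x = inl m := by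
  cases x <;> simp [attachLeaf]

lemma Walk.exists_support_eq_map_inl {H : SimpleGraph (α ⊕ β)} {u v : α ⊕ β} (p : H.Walk u v)
    {a b : α} (ha : u = inl a) (hb : v = inl b) (hp : ∀ x ∈ p.support, x.isLeft) :
    ∃ q : (H.comap inl).Walk a b, p.support = q.support.map inl := by
  induction p generalizing a with
  | nil =>
    obtain rfl : a = b := inl_injective (ha.symm.trans hb)
    exact ⟨.nil, by simp [ha]⟩
  | cons h p ih =>
    subst ha
    obtain ⟨c, rfl⟩ := isLeft_iff.mp (hp _ (p.start_mem_support.tail _))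
    obtain ⟨q, hq⟩ := ih rfl hb fun x hx => hp x (.tail _ hx)
    exact ⟨.cons (comap_adj.mpr h) q, by simp [hq]⟩

lemma attachLeaf_exists_isPath_of_isPath {a b : V} (p : (G.attachLeaf m).Walk (inl a) (inl b))
    (hp : p.IsPath) : ∃ q : G.Walk a b, q.IsPath ∧ p.support = q.support.map inl := by
  have hleaf : ((G.attachLeaf m).neighborSet (inr ())).Subsingleton :=
    Set.subsingleton_of_forall_eq (inl m) fun _ hy => attachLeaf_adj_inr_left.mp hy
  have hleft : ∀ x ∈ p.support, x.isLeft := by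
    rintro (x | ⟨⟩) hx
    · rfl
    · exact absurd hx <|
        hp.isTrail.not_mem_support_of_subsingleton_neighborSet (by simp) (by simp) hleaf
  obtain ⟨q, hq⟩ := p.exists_support_eq_map_inl rfl rfl hleft
  refine ⟨q, ?_, hq⟩
  rw [Walk.isPath_def, hq] at hp
  exact (Walk.isPath_def _).mpr (hp.of_map _)

end SimpleGraph

open SimpleGraph

def RunningIntersection {V Var : Type*} (G : SimpleGraph V) (C : V → Set Var) : Prop :=
  ∀ (i j k : V) (p : G.Walk i j), p.IsPath → k ∈ p.support → C i ∩ C j ⊆ C k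

namespace RunningIntersection

variable {V Var : Type*} {G : SimpleGraph V} {C : V → Set Var} {m : V} {Cn : Set Var}

lemma attachLeaf_inl_inl (hG : RunningIntersection G C) {a b : V} {k : V ⊕ Unit}
    (p : (G.attachLeaf m).Walk (inl a) (inl b)) (hp : p.IsPath) (hk : k ∈ p.support) :
    C a ∩ C b ⊆ Sum.elim C (fun _ => Cn) k := by
  obtain ⟨q, hq, hsupp⟩ := attachLeaf_exists_isPath_of_isPath p hp
  obtain ⟨k', hk', rfl⟩ := List.mem_map.mp (hsupp ▸ hk)
  exact hG a b k' q hq hk'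

lemma attachLeaf_inr_inl (hG : RunningIntersection G C) (hnew : ∀ x ∈ Cn, x ∈ C m ∨ ∀ i, x ∉ C i)
    {b : V} {k : V ⊕ Unit} (p : (G.attachLeaf m).Walk (inr ()) (inl b)) (hp : p.IsPath)
    (hk : k ∈ p.support) : Cn ∩ C b ⊆ Sum.elim C (fun _ => Cn) k := by
  rintro x ⟨hxn, hxb⟩
  rcases p with _ | ⟨h, p⟩
  obtain rfl := attachLeaf_adj_inr_left.mp h
  rcases List.mem_cons.mp hk with rfl | hk
  · exact hxn
  have hxm : x ∈ C m := (hnew x hxn).resolve_right fun h => h b hxb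
  exact hG.attachLeaf_inl_inl p (Walk.cons_isPath_iff _ _ |>.mp hp).1 hk ⟨hxm, hxb⟩

theorem attachLeaf (hG : RunningIntersection G C)
    (hnew : ∀ x ∈ Cn, x ∈ C m ∨ ∀ i, x ∉ C i) :
    RunningIntersection (G.attachLeaf m) (Sum.elim C fun _ => Cn) := by
  rintro (a | ⟨⟨⟩⟩) (b | ⟨⟨⟩⟩) k p hp hk
  · exact hG.attachLeaf_inl_inl p hp hk
  · rw [Set.inter_comm]
    exact hG.attachLeaf_inr_inl hnew p.reverse hp.reverse (by simpa using hk)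
  · exact hG.attachLeaf_inr_inl hnew p hp hk
  · rw [Walk.nil_iff_support_eq.mp (Walk.isPath_iff_nil.mp hp), List.mem_singleton] at hk
    exact hk ▸ Set.inter_subset_left

end RunningIntersection

theorem stmt_1_general {V Var : Type*} (G : SimpleGraph V)
    (C : V → Set Var)
    (RIP : ∀ (i j k : V) (p : G.Walk i j), p.IsPath → k ∈ p.support → C i ∩ C j ⊆ C k)
    (m : V) (Cn : Set Var)
    (hnew : ∀ x ∈ Cn, x ∈ C m ∨ ∀ i : V, x ∉ C i)
    (G' : SimpleGraph (V ⊕ Unit))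
    (hG' : ∀ a b : V ⊕ Unit, G'.Adj a b ↔
      ((∃ a' b', a = Sum.inl a' ∧ b = Sum.inl b' ∧ G.Adj a' b') ∨
        (a = Sum.inl m ∧ b = Sum.inr ()) ∨ (a = Sum.inr () ∧ b = Sum.inl m))) :
    ∀ (i j k : V ⊕ Unit) (p : G'.Walk i j), p.IsPath → k ∈ p.support →
      Sum.elim C (fun _ => Cn) i ∩ Sum.elim C (fun _ => Cn) j
        ⊆ Sum.elim C (fun _ => Cn) k := by
  obtain rfl : G' = G.attachLeaf m := by
    ext (a | a) (b | b) <;> simp [hG', attachLeaf, eq_comm]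
  exact RunningIntersection.attachLeaf RIP hnew

/-- Attaching a new node n (cluster Cn) to node m of a junction tree, where every
variable of Cn is either in C m or occurs in no existing node, preserves the running
intersection property. The new tree is modelled on V ⊕ Unit with the new node inr (). -/
theorem stmt_1 {V Var : Type*} (G : SimpleGraph V) (hT : G.IsTree)
    (C : V → Set Var)
    (RIP : ∀ (i j k : V) (p : G.Walk i j), p.IsPath → k ∈ p.support → C i ∩ C j ⊆ C k)
    (m : V) (Cn : Set Var)
    (hnew : ∀ x ∈ Cn, x ∈ C m ∨ ∀ i : V, x ∉ C i)
    (G' : SimpleGraph (V ⊕ Unit))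
    (hG' : ∀ a b : V ⊕ Unit, G'.Adj a b ↔
      ((∃ a' b', a = Sum.inl a' ∧ b = Sum.inl b' ∧ G.Adj a' b') ∨
        (a = Sum.inl m ∧ b = Sum.inr ()) ∨ (a = Sum.inr () ∧ b = Sum.inl m))) :
    ∀ (i j k : V ⊕ Unit) (p : G'.Walk i j), p.IsPath → k ∈ p.support →
      Sum.elim C (fun _ => Cn) i ∩ Sum.elim C (fun _ => Cn) j
        ⊆ Sum.elim C (fun _ => Cn) k :=
  stmt_1_general G C RIP m Cn hnew G' hG'
end

section
/- Let R and S be finite types, φ : R × S → ℝ≥0, X a finite index set, and define for a histogram h : R → ℕ the count-converted factor φ'(h, s) = Π_{r ∈ R} φ(r, s)^{h(r)}. Then for any s ∈ S, the sum over all assignments f : X → R of Π_{x ∈ X} φ(f(x), s) equals the sum over all histograms h with Σ_r h(r) = |X| of Mul(h) · φ'(h, s), where Mul(h) = |X|! / Π_r h(r)! is the multinomial coefficient. -/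
open Finset

/-! Both sides equal `(∑ r, φ (r, s)) ^ |X|`: the left one by distributing the product over
`X` of the sums over `R`, the right one by the multinomial theorem, whose index set
`piAntidiag univ |X|` is exactly the set of histograms of total mass `|X|`. -/

lemma Finset.filter_piFinset_range_sum_eq_piAntidiag {ι : Type*} [Fintype ι] [DecidableEq ι]
    (n : ℕ) :
    (Fintype.piFinset fun _ : ι => range (n + 1)).filter (fun h => ∑ i, h i = n)
      = piAntidiag univ n := by
  ext h
  simp only [mem_filter, Fintype.mem_piFinset, mem_range, mem_piAntidiag, mem_univ,
    implies_true, and_true, and_iff_right_iff_imp]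
  intro hsum i
  have := single_le_sum (f := h) (fun _ _ => Nat.zero_le _) (mem_univ i)
  omega

lemma Fintype.sum_prod_comp_eq_sum_piAntidiag {X R M : Type*} [Fintype X] [DecidableEq X]
    [Fintype R] [DecidableEq R] [CommSemiring M] (g : R → M) :
    ∑ f : X → R, ∏ x, g (f x)
      = ∑ h ∈ piAntidiag univ (card X), Nat.multinomial univ h * ∏ r, g r ^ h r := by
  rw [← sum_pow_eq_sum_piAntidiag, ← card_univ, ← prod_const, Fintype.prod_sum]

/-- Summation over assignments reorganized by histograms: the ground sum equals the
sum over histograms of the multinomial coefficient times the count-converted factor. -/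
theorem stmt_7 {X R S : Type*} [Fintype X] [DecidableEq X] [Fintype R] [DecidableEq R]
    (φ : R × S → NNReal) (s : S) :
    ∑ f : X → R, ∏ x : X, φ (f x, s)
      = ∑ h ∈ (Fintype.piFinset fun _ : R => Finset.range (Fintype.card X + 1)).filter
            (fun h => ∑ r : R, h r = Fintype.card X),
          ((Nat.factorial (Fintype.card X) / ∏ r : R, Nat.factorial (h r) : ℕ) : NNReal)
            * ∏ r : R, φ (r, s) ^ h r := by
  rw [filter_piFinset_range_sum_eq_piAntidiag,
    Fintype.sum_prod_comp_eq_sum_piAntidiag fun r => φ (r, s)]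
  refine sum_congr rfl fun h hh => ?_
  rw [Nat.multinomial, (mem_piAntidiag.1 hh).1]
end

section
/- Consider a finite collection of factors {φ_i : A_i → ℝ≥0} over finite variable ranges, defining an unnormalized distribution P(a) = Π_i φ_i(a|_{A_i}) over joint assignments a. If the variables are partitioned into sets U, I, W such that every factor depends only on variables within U ∪ I or within I ∪ W (no factor mentions both a variable in U and a variable in W), then the marginal on W of P, after fixing the values on I, factorizes: Σ_{u} P(u, i, w) = (Σ_u Π_{factors on U∪I} φ(u,i)) · (Π_{factors on I∪W} φ(i,w)). -/
open Finset

theorem prod_factors_congr_of_scope_subset {Var ι M : Type*} {Val : Var → Type*} [CommMonoid M]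
    {A : ι → Finset Var} {φ : ι → (∀ v, Val v) → M}
    (hscope : ∀ (i : ι) (a b : ∀ v, Val v), (∀ v ∈ A i, a v = b v) → φ i a = φ i b)
    {S : Finset Var} {F : Finset ι} (hF : ∀ i ∈ F, A i ⊆ S)
    {a b : ∀ v, Val v} (hab : ∀ v ∈ S, a v = b v) :
    ∏ i ∈ F, φ i a = ∏ i ∈ F, φ i b :=
  prod_congr rfl fun i hi => hscope i a b fun v hv => hab v (hF i hi hv)

/-- The factors outside `F₁` only see `I ∪ W`, which is fixed along the summation, so their
product leaves the sum as a constant. -/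
theorem stmt_8_general {Var : Type*} [Fintype Var] [DecidableEq Var]
    (Val : Var → Type*) [∀ v, Fintype (Val v)] [∀ v, DecidableEq (Val v)]
    {ι : Type*} [Fintype ι] [DecidableEq ι]
    (A : ι → Finset Var) (φ : ι → (∀ v, Val v) → NNReal)
    (hscope : ∀ (i : ι) (a b : ∀ v, Val v), (∀ v ∈ A i, a v = b v) → φ i a = φ i b)
    (I W : Finset Var)
    (F₁ : Finset ι)
    (h₂ : ∀ i ∉ F₁, A i ⊆ I ∪ W)
    (a : ∀ v, Val v) :
    ∑ b ∈ Finset.univ.filter (fun b : ∀ v, Val v => ∀ v ∈ I ∪ W, b v = a v),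
        ∏ i : ι, φ i b
      = (∑ b ∈ Finset.univ.filter (fun b : ∀ v, Val v => ∀ v ∈ I ∪ W, b v = a v),
            ∏ i ∈ F₁, φ i b)
          * ∏ i ∈ F₁ᶜ, φ i a := by
  rw [sum_mul]
  refine sum_congr rfl fun b hb => ?_
  rw [← prod_mul_prod_compl F₁ fun i => φ i b,
    prod_factors_congr_of_scope_subset hscope (fun i hi => h₂ i (mem_compl.mp hi))
      (mem_filter.mp hb).2]

/-- m-separation via an interface: if every factor's scope lies within U ∪ I or within
I ∪ W, then marginalizing the factor product over the U-variables (fixing I and W as in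
the assignment a) factorizes into a message over I times the product of I∪W factors. -/
theorem stmt_8 {Var : Type*} [Fintype Var] [DecidableEq Var]
    (Val : Var → Type*) [∀ v, Fintype (Val v)] [∀ v, DecidableEq (Val v)]
    {ι : Type*} [Fintype ι] [DecidableEq ι]
    (A : ι → Finset Var) (φ : ι → (∀ v, Val v) → NNReal)
    (hscope : ∀ (i : ι) (a b : ∀ v, Val v), (∀ v ∈ A i, a v = b v) → φ i a = φ i b)
    (U I W : Finset Var)
    (hUI : Disjoint U I) (hUW : Disjoint U W) (hIW : Disjoint I W)
    (hcover : U ∪ I ∪ W = Finset.univ)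
    (F₁ : Finset ι)
    (h₁ : ∀ i ∈ F₁, A i ⊆ U ∪ I) (h₂ : ∀ i ∉ F₁, A i ⊆ I ∪ W)
    (a : ∀ v, Val v) :
    ∑ b ∈ Finset.univ.filter (fun b : ∀ v, Val v => ∀ v ∈ I ∪ W, b v = a v),
        ∏ i : ι, φ i b
      = (∑ b ∈ Finset.univ.filter (fun b : ∀ v, Val v => ∀ v ∈ I ∪ W, b v = a v),
            ∏ i ∈ F₁, φ i b)
          * ∏ i ∈ F₁ᶜ, φ i a :=
  stmt_8_general Val A φ hscope I W F₁ h₂ a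
end
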